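/- Consider a two-sender instance over a finite field F with parts P_1, P_2, P_{12}, side-information sets K_i, and eavesdropper set A with A_T = A ∩ P_T. Assume the interactions between P_2 and P_{12} are fully participated in both directions: P_{12} ⊆ K_i for every i ∈ P_2, and P_2 ⊆ K_j for every j ∈ P_{12}. Suppose for each T ∈ {1, 2, {1,2}} there exists a matrix G_T ∈ F^{l_T×|P_T|} that is a valid index code for the sub-instance induced on P_T and weakly secure against A_T. Then the code in which sender 2 transmits the symbolwise sum of G_2x^{(2)} and G_{12}x^{(12)} (the shorter codeword zero-padded to length max{l_2, l_{12}}) and sender 1 transmits G_1x^{(1)} is a valid weakly secure two-sender linear index code for the full instance of total length max{l_{12}, l_2} + l_1. In particular l* ≤ max{l*_{12}, l*_2} + l*_1. -/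

import Mathlib

open Matrix Sum

attribute [local instance] Classical.propDecidable

noncomputable section

variable (F : Type*) [Field F] [Fintype F]

/-- The row space of a matrix: the span of its rows. -/
def rowSpace {ρ ι : Type*} (G : Matrix ρ ι F) : Submodule F (ι → F) :=
  Submodule.span F (Set.range fun r j => G r j)

/-- Weak security of the linear code `x ↦ G x` against an eavesdropper knowing `x j` for
`j ∈ A`: for every `i ∉ A` and every `u` supported in `A`, `u + e i` is not in the
row space of `G`. -/
def WeaklySecure {ρ ι : Type*} (G : Matrix ρ ι F) (A : Set ι) : Prop :=
  ∀ i ∉ A, ∀ u : ι → F, (∀ j, u j ≠ 0 → j ∈ A) →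
    u + Pi.single i (1 : F) ∉ rowSpace F G

/-- `G` is a valid index code for side-information sets `K`: every receiver `i` can
decode `x i` from the codeword `G.mulVec x` and its side information `x|_{K i}`. -/
def ValidCode {ρ ι : Type*} [Fintype ι] (K : ι → Set ι) (G : Matrix ρ ι F) : Prop :=
  ∀ i : ι, ∃ D : (ρ → F) → (↥(K i) → F) → F,
    ∀ x : ι → F, D (G.mulVec x) (fun j => x j.1) = x i

/-- `G` has two-sender form for the parts `P1`, `P2`: its rows split into sender-1 rows,
zero on all columns in `P2`, and sender-2 rows, zero on all columns in `P1`. -/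
def TwoSenderForm {ρ ι : Type*} (P1 P2 : Set ι) (G : Matrix ρ ι F) : Prop :=
  ∃ S : Set ρ, (∀ r ∈ S, ∀ j ∈ P2, G r j = 0) ∧ (∀ r ∉ S, ∀ j ∈ P1, G r j = 0)

/-- Achievable lengths of valid weakly secure (single-sender) linear index codes. -/
def oneLens {ι : Type*} [Fintype ι] (K : ι → Set ι) (A : Set ι) : Set ℕ :=
  {l | ∃ G : Matrix (Fin l) ι F, ValidCode F K G ∧ WeaklySecure F G A}

/-- Achievable total lengths of valid weakly secure two-sender linear index codes. -/
def twoLens {ι : Type*} [Fintype ι] (P1 P2 : Set ι) (K : ι → Set ι) (A : Set ι) :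
    Set ℕ :=
  {l | ∃ G : Matrix (Fin l) ι F,
      TwoSenderForm F P1 P2 G ∧ ValidCode F K G ∧ WeaklySecure F G A}

/-- Side-information sets of the sub-instance induced on `S`. -/
def subK {ι : Type*} (K : ι → Set ι) (S : Set ι) : ↥S → Set ↥S :=
  fun i => {j : ↥S | (j : ι) ∈ K (i : ι)}

/-- Extend a matrix with columns indexed by `↥S` to one with columns indexed by `ι`,
filling the new columns with zeros. -/
def extendCols {ρ ι : Type*} (S : Set ι) (G : Matrix ρ ↥S F) : Matrix ρ ι F :=
  Matrix.of fun r => Function.extend (Subtype.val) (G r) (fun _ => 0)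

/-- Zero-pad a matrix with `l` rows to one with `L` rows. -/
def padMat {ι : Type*} (L : ℕ) {l : ℕ} (G : Matrix (Fin l) ι F) : Matrix (Fin L) ι F :=
  Matrix.of fun r j => if h : (r : ℕ) < l then G ⟨(r : ℕ), h⟩ j else 0

end

/-! Sender 2 transmits `G2 x⁽²⁾ + G12 x⁽¹²⁾`. A receiver in `P2` knows all of `x⁽¹²⁾`, so it
can subtract `G12 x⁽¹²⁾` and is left with the codeword of its own sub-instance; symmetrically
for `P12`, while `P1` is served by sender 1 alone. For security, restricting the columns of
the combined matrix to a part `P_T` kills every block except the one of `G_T`, so it maps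
the row space into that of `G_T`; a vector `u + e_i` (with `i ∈ P_T`) in the row space would
restrict to one contradicting the weak security of `G_T`. -/

section RowSpace

variable {F ρ σ ι κ : Type*} [Field F]

lemma rowSpace_fromRows (A : Matrix ρ ι F) (B : Matrix σ ι F) :
    rowSpace F (fromRows A B) = rowSpace F A ⊔ rowSpace F B := by
  rw [rowSpace, rowSpace, rowSpace, ← Submodule.span_union, ← Set.Sum.elim_range]
  rfl

lemma rowSpace_add_le (A B : Matrix ρ ι F) :
    rowSpace F (A + B) ≤ rowSpace F A ⊔ rowSpace F B := by
  rw [rowSpace, Submodule.span_le]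
  rintro _ ⟨r, rfl⟩
  exact Submodule.add_mem_sup (Submodule.subset_span ⟨r, rfl⟩)
    (Submodule.subset_span ⟨r, rfl⟩)

lemma rowSpace_zero : rowSpace F (0 : Matrix ρ ι F) = ⊥ := by
  rw [rowSpace, Submodule.span_eq_bot]
  rintro _ ⟨r, rfl⟩
  rfl

lemma rowSpace_submatrix_equiv (e : σ ≃ ρ) (G : Matrix ρ ι F) :
    rowSpace F (G.submatrix e id) = rowSpace F G := by
  rw [rowSpace, rowSpace]
  exact congrArg _ (e.surjective.range_comp fun r j => G r j)

lemma map_funLeft_rowSpace (f : κ → ι) (G : Matrix ρ ι F) :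
    (rowSpace F G).map (LinearMap.funLeft F F f) = rowSpace F (G.submatrix id f) := by
  rw [rowSpace, Submodule.map_span, ← Set.range_comp]
  rfl

lemma rowSpace_padMat_le (L : ℕ) {l : ℕ} (M : Matrix (Fin l) ι F) :
    rowSpace F (padMat F L M) ≤ rowSpace F M := by
  rw [rowSpace, Submodule.span_le]
  rintro _ ⟨r, rfl⟩
  by_cases h : (r : ℕ) < l
  · simp only [padMat, of_apply, dif_pos h]
    exact Submodule.subset_span ⟨⟨r, h⟩, rfl⟩
  · simp only [padMat, of_apply, dif_neg h]
    exact zero_mem (rowSpace F M)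

end RowSpace

section ExtendCols

variable {F ρ ι : Type*} [Field F] {S T : Set ι}

lemma extendCols_apply_val (M : Matrix ρ S F) (r : ρ) (j : S) :
    extendCols F S M r j = M r j :=
  Subtype.val_injective.extend_apply (M r) (fun _ => 0) j

lemma extendCols_apply_of_notMem (M : Matrix ρ S F) (r : ρ) {j : ι} (hj : j ∉ S) :
    extendCols F S M r j = 0 :=
  Function.extend_apply' (M r) (fun _ => 0) j fun ⟨a, ha⟩ => hj (ha ▸ a.2)

lemma extendCols_submatrix_val (M : Matrix ρ S F) :
    (extendCols F S M).submatrix id Subtype.val = M :=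
  Matrix.ext (extendCols_apply_val M)

lemma extendCols_submatrix_val_of_disjoint (h : Disjoint S T) (M : Matrix ρ S F) :
    (extendCols F S M).submatrix id (Subtype.val : T → ι) = 0 :=
  Matrix.ext fun r j => extendCols_apply_of_notMem M r (Set.disjoint_right.mp h j.2)

lemma extendCols_mulVec [Fintype ι] (M : Matrix ρ S F) (x : ι → F) :
    extendCols F S M *ᵥ x = M *ᵥ fun j : S => x j := by
  ext r
  have hout : ∑ j : {j // j ∉ S}, extendCols F S M r j * x j = 0 :=
    Finset.sum_eq_zero fun j _ => by rw [extendCols_apply_of_notMem M r j.2, zero_mul]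
  rw [mulVec, dotProduct, ← Fintype.sum_subtype_add_sum_subtype (· ∈ S), hout, add_zero]
  simp only [extendCols_apply_val, mulVec, dotProduct]

lemma padMat_extendCols (L : ℕ) {l : ℕ} (M : Matrix (Fin l) S F) :
    padMat F L (extendCols F S M) = extendCols F S (padMat F L M) := by
  ext r j
  by_cases hj : j ∈ S
  · lift j to S using hj
    simp only [padMat, of_apply, extendCols_apply_val]
  · simp only [padMat, of_apply, extendCols_apply_of_notMem _ _ hj, dite_eq_ite, ite_self]

lemma padMat_mulVec_castLE {ι : Type*} [Fintype ι] {L l : ℕ} (h : l ≤ L)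
    (M : Matrix (Fin l) ι F) (x : ι → F) (r : Fin l) :
    (padMat F L M *ᵥ x) (Fin.castLE h r) = (M *ᵥ x) r := by
  simp [mulVec, dotProduct, padMat, Fin.val_castLE]

end ExtendCols

section Codes

variable {F ρ σ ι : Type*} [Field F]

lemma WeaklySecure.add_single_notMem_rowSpace {A S : Set ι} {H : Matrix σ S F}
    (hH : WeaklySecure F H (Subtype.val ⁻¹' A)) {G : Matrix ρ ι F}
    (hGH : rowSpace F (G.submatrix id Subtype.val) ≤ rowSpace F H)
    {i : ι} (hi : i ∈ S) (hiA : i ∉ A) {u : ι → F} (hu : ∀ j, u j ≠ 0 → j ∈ A) :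
    u + Pi.single i 1 ∉ rowSpace F G := by
  intro hmem
  refine hH ⟨i, hi⟩ hiA (fun j => u j) (fun j hj => hu j hj) ?_
  rw [← map_funLeft_rowSpace] at hGH
  convert hGH (Submodule.mem_map_of_mem hmem) using 1
  ext j
  simp [Pi.single_apply, Subtype.ext_iff]

variable [Fintype ι]

lemma ValidCode.exists_decoder_of_recover {K : ι → Set ι} {S : Set ι} {H : Matrix σ S F}
    (hH : ValidCode F (subK K S) H) (G : Matrix ρ ι F) {i : ι} (hi : i ∈ S)
    (f : (ρ → F) → (K i → F) → σ → F)
    (hf : ∀ x, f (G *ᵥ x) (fun j => x j) = H *ᵥ fun j : S => x j) :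
    ∃ D : (ρ → F) → (K i → F) → F, ∀ x : ι → F, D (G *ᵥ x) (fun j => x j) = x i := by
  obtain ⟨D, hD⟩ := hH ⟨i, hi⟩
  exact ⟨fun c s => D (f c s) fun j => s ⟨j, j.2⟩, fun x =>
    (congrArg (fun c => D c _) (hf x)).trans (hD _)⟩

lemma exists_recover_padMat_add {S T Kᵢ : Set ι} {L a b : ℕ} (hL : a ≤ L) (hT : T ⊆ Kᵢ)
    (M : Matrix (Fin a) S F) (N : Matrix (Fin b) T F) :
    ∃ f : (Fin L → F) → (Kᵢ → F) → Fin a → F, ∀ x : ι → F,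
      f ((padMat F L (extendCols F S M) + padMat F L (extendCols F T N)) *ᵥ x)
          (fun j => x j) = M *ᵥ fun j : S => x j := by
  refine ⟨fun c s r => c (Fin.castLE hL r) -
    (padMat F L N *ᵥ fun j : T => s ⟨j, hT j.2⟩) (Fin.castLE hL r), fun x => ?_⟩
  ext r
  simp only [add_mulVec, padMat_extendCols, extendCols_mulVec, Pi.add_apply,
    add_sub_cancel_right, padMat_mulVec_castLE]

lemma mem_twoLens_of_equiv {l : ℕ} (e : Fin l ≃ ρ) {P1 P2 A : Set ι} {K : ι → Set ι}
    {G : Matrix ρ ι F} (hform : TwoSenderForm F P1 P2 G) (hG : ValidCode F K G)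
    (hGs : WeaklySecure F G A) : l ∈ twoLens F P1 P2 K A := by
  obtain ⟨S, hS1, hS2⟩ := hform
  refine ⟨G.submatrix e id, ⟨e ⁻¹' S, fun r hr => hS1 (e r) hr, fun r hr => hS2 (e r) hr⟩,
    fun i => ?_, ?_⟩
  · obtain ⟨D, hD⟩ := hG i
    exact ⟨fun c => D (c ∘ e.symm), fun x => by convert hD x using 2; ext r; simp [mulVec]⟩
  · rwa [WeaklySecure, rowSpace_submatrix_equiv]

end Codes

section SumCode

variable {F ι : Type*} [Field F] {P1 P2 P12 : Set ι} {l1 l2 l12 : ℕ}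

noncomputable def twoSenderSumCode (L : ℕ) (G1 : Matrix (Fin l1) P1 F)
    (G2 : Matrix (Fin l2) P2 F) (G12 : Matrix (Fin l12) P12 F) : Matrix (Fin l1 ⊕ Fin L) ι F :=
  fromRows (extendCols F P1 G1)
    (padMat F L (extendCols F P2 G2) + padMat F L (extendCols F P12 G12))

variable (L : ℕ) (G1 : Matrix (Fin l1) P1 F) (G2 : Matrix (Fin l2) P2 F)
  (G12 : Matrix (Fin l12) P12 F)

lemma twoSenderSumCode_inl_apply_of_mem (h12 : Disjoint P1 P2) (r : Fin l1) {j : ι}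
    (hj : j ∈ P2) : twoSenderSumCode L G1 G2 G12 (Sum.inl r) j = 0 :=
  extendCols_apply_of_notMem G1 r (Set.disjoint_right.mp h12 hj)

lemma twoSenderSumCode_inr_apply_of_mem (h12 : Disjoint P1 P2) (h112 : Disjoint P1 P12)
    (r : Fin L) {j : ι} (hj : j ∈ P1) : twoSenderSumCode L G1 G2 G12 (Sum.inr r) j = 0 := by
  simp [twoSenderSumCode, padMat_extendCols,
    extendCols_apply_of_notMem _ _ (Set.disjoint_left.mp h12 hj),
    extendCols_apply_of_notMem _ _ (Set.disjoint_left.mp h112 hj)]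

lemma twoSenderForm_twoSenderSumCode (h12 : Disjoint P1 P2) (h112 : Disjoint P1 P12) :
    TwoSenderForm F P1 P2 (twoSenderSumCode L G1 G2 G12) := by
  refine ⟨Set.range Sum.inl, ?_, ?_⟩
  · rintro _ ⟨r, rfl⟩ j hj
    exact twoSenderSumCode_inl_apply_of_mem L G1 G2 G12 h12 r hj
  · rintro (r | r) hr j hj
    · exact absurd ⟨r, rfl⟩ hr
    · exact twoSenderSumCode_inr_apply_of_mem L G1 G2 G12 h12 h112 r hj

lemma rowSpace_restrict_twoSenderSumCode_le (S : Set ι) :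
    rowSpace F ((twoSenderSumCode L G1 G2 G12).submatrix id (Subtype.val : S → ι)) ≤
      rowSpace F ((extendCols F P1 G1).submatrix id Subtype.val) ⊔
        rowSpace F ((extendCols F P2 G2).submatrix id Subtype.val) ⊔
        rowSpace F ((extendCols F P12 G12).submatrix id Subtype.val) := by
  simp only [← map_funLeft_rowSpace, ← Submodule.map_sup]
  refine Submodule.map_mono ?_
  rw [twoSenderSumCode, rowSpace_fromRows, sup_assoc]
  exact sup_le_sup_left ((rowSpace_add_le _ _).trans
    (sup_le_sup (rowSpace_padMat_le L _) (rowSpace_padMat_le L _))) _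

lemma validCode_twoSenderSumCode [Fintype ι] {K : ι → Set ι}
    (hcov : P1 ∪ P2 ∪ P12 = Set.univ)
    (hfull1 : ∀ i ∈ P2, P12 ⊆ K i) (hfull2 : ∀ j ∈ P12, P2 ⊆ K j)
    (hL2 : l2 ≤ L) (hL12 : l12 ≤ L) (hG1 : ValidCode F (subK K P1) G1)
    (hG2 : ValidCode F (subK K P2) G2) (hG12 : ValidCode F (subK K P12) G12) :
    ValidCode F K (twoSenderSumCode L G1 G2 G12) := by
  intro i
  obtain (hi | hi) | hi : i ∈ P1 ∪ P2 ∪ P12 := hcov ▸ Set.mem_univ i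
  · refine hG1.exists_decoder_of_recover _ hi (fun c _ => c ∘ Sum.inl) fun x => ?_
    simp [twoSenderSumCode, fromRows_mulVec, extendCols_mulVec]
  · obtain ⟨f, hf⟩ := exists_recover_padMat_add hL2 (hfull1 i hi) G2 G12
    refine hG2.exists_decoder_of_recover _ hi (fun c s => f (c ∘ Sum.inr) s) fun x => ?_
    simp [twoSenderSumCode, fromRows_mulVec, hf]
  · obtain ⟨f, hf⟩ := exists_recover_padMat_add hL12 (hfull2 i hi) G12 G2
    rw [add_comm] at hf
    refine hG12.exists_decoder_of_recover _ hi (fun c s => f (c ∘ Sum.inr) s) fun x => ?_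
    simp [twoSenderSumCode, fromRows_mulVec, hf]

lemma weaklySecure_twoSenderSumCode {A : Set ι} (h12 : Disjoint P1 P2)
    (h112 : Disjoint P1 P12) (h212 : Disjoint P2 P12) (hcov : P1 ∪ P2 ∪ P12 = Set.univ)
    (hG1 : WeaklySecure F G1 (Subtype.val ⁻¹' A))
    (hG2 : WeaklySecure F G2 (Subtype.val ⁻¹' A))
    (hG12 : WeaklySecure F G12 (Subtype.val ⁻¹' A)) :
    WeaklySecure F (twoSenderSumCode L G1 G2 G12) A := by
  intro i hiA u hu
  have hle := rowSpace_restrict_twoSenderSumCode_le L G1 G2 G12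
  obtain (hi | hi) | hi : i ∈ P1 ∪ P2 ∪ P12 := hcov ▸ Set.mem_univ i
  · refine hG1.add_single_notMem_rowSpace ((hle P1).trans ?_) hi hiA hu
    simp [extendCols_submatrix_val, extendCols_submatrix_val_of_disjoint h12.symm,
      extendCols_submatrix_val_of_disjoint h112.symm, rowSpace_zero]
  · refine hG2.add_single_notMem_rowSpace ((hle P2).trans ?_) hi hiA hu
    simp [extendCols_submatrix_val, extendCols_submatrix_val_of_disjoint h12,
      extendCols_submatrix_val_of_disjoint h212.symm, rowSpace_zero]
  · refine hG12.add_single_notMem_rowSpace ((hle P12).trans ?_) hi hiA hu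
    simp [extendCols_submatrix_val, extendCols_submatrix_val_of_disjoint h112,
      extendCols_submatrix_val_of_disjoint h212, rowSpace_zero]

lemma max_add_mem_twoLens [Fintype ι] {K : ι → Set ι} {A : Set ι} (h12 : Disjoint P1 P2)
    (h112 : Disjoint P1 P12) (h212 : Disjoint P2 P12) (hcov : P1 ∪ P2 ∪ P12 = Set.univ)
    (hfull1 : ∀ i ∈ P2, P12 ⊆ K i) (hfull2 : ∀ j ∈ P12, P2 ⊆ K j)
    (hl1 : l1 ∈ oneLens F (subK K P1) (Subtype.val ⁻¹' A))
    (hl2 : l2 ∈ oneLens F (subK K P2) (Subtype.val ⁻¹' A))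
    (hl12 : l12 ∈ oneLens F (subK K P12) (Subtype.val ⁻¹' A)) :
    max l12 l2 + l1 ∈ twoLens F P1 P2 K A := by
  obtain ⟨G1, hG1v, hG1s⟩ := hl1
  obtain ⟨G2, hG2v, hG2s⟩ := hl2
  obtain ⟨G12, hG12v, hG12s⟩ := hl12
  exact mem_twoLens_of_equiv ((finCongr (add_comm _ _)).trans finSumFinEquiv.symm)
    (twoSenderForm_twoSenderSumCode _ G1 G2 G12 h12 h112)
    (validCode_twoSenderSumCode _ G1 G2 G12 hcov hfull1 hfull2 (le_max_right _ _)
      (le_max_left _ _) hG1v hG2v hG12v)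
    (weaklySecure_twoSenderSumCode _ G1 G2 G12 h12 h112 h212 hcov hG1s hG2s hG12s)

end SumCode

variable (F : Type*) [Field F] [Fintype F]

theorem caseIID_code {m l1 l2 l12 : ℕ}
    (P1 P2 P12 : Set (Fin m))
    (h12 : Disjoint P1 P2) (h112 : Disjoint P1 P12) (h212 : Disjoint P2 P12)
    (hcov : P1 ∪ P2 ∪ P12 = Set.univ)
    (K : Fin m → Set (Fin m))
    (hfull1 : ∀ i ∈ P2, P12 ⊆ K i)
    (hfull2 : ∀ j ∈ P12, P2 ⊆ K j)
    (A : Set (Fin m))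
    (G1 : Matrix (Fin l1) ↥P1 F) (G2 : Matrix (Fin l2) ↥P2 F)
    (G12 : Matrix (Fin l12) ↥P12 F)
    (hG1v : ValidCode F (subK K P1) G1)
    (hG1s : WeaklySecure F G1 (Subtype.val ⁻¹' A))
    (hG2v : ValidCode F (subK K P2) G2)
    (hG2s : WeaklySecure F G2 (Subtype.val ⁻¹' A))
    (hG12v : ValidCode F (subK K P12) G12)
    (hG12s : WeaklySecure F G12 (Subtype.val ⁻¹' A)) :
    let G : Matrix (Fin l1 ⊕ Fin (max l2 l12)) (Fin m) F :=
      Matrix.of (Sum.elim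
        (fun r => extendCols F P1 G1 r)
        (fun r => (padMat F (max l2 l12) (extendCols F P2 G2) +
          padMat F (max l2 l12) (extendCols F P12 G12)) r))
    (∀ r : Fin l1, ∀ j ∈ P2, G (Sum.inl r) j = 0) ∧
    (∀ r : Fin (max l2 l12), ∀ j ∈ P1, G (Sum.inr r) j = 0) ∧
    ValidCode F K G ∧ WeaklySecure F G A ∧
    sInf (twoLens F P1 P2 K A) ≤
      max (sInf (oneLens F (subK K P12) (Subtype.val ⁻¹' A)))
          (sInf (oneLens F (subK K P2) (Subtype.val ⁻¹' A))) +
        sInf (oneLens F (subK K P1) (Subtype.val ⁻¹' A)) := by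
  intro G
  have hG : G = twoSenderSumCode (max l2 l12) G1 G2 G12 := rfl
  rw [hG]
  refine ⟨fun r j hj => twoSenderSumCode_inl_apply_of_mem _ G1 G2 G12 h12 r hj,
    fun r j hj => twoSenderSumCode_inr_apply_of_mem _ G1 G2 G12 h12 h112 r hj,
    validCode_twoSenderSumCode _ G1 G2 G12 hcov hfull1 hfull2 (le_max_left _ _)
      (le_max_right _ _) hG1v hG2v hG12v,
    weaklySecure_twoSenderSumCode _ G1 G2 G12 h12 h112 h212 hcov hG1s hG2s hG12s, ?_⟩
  exact Nat.sInf_le (max_add_mem_twoLens h12 h112 h212 hcov hfull1 hfull2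
    (Nat.sInf_mem ⟨l1, G1, hG1v, hG1s⟩) (Nat.sInf_mem ⟨l2, G2, hG2v, hG2s⟩)
    (Nat.sInf_mem ⟨l12, G12, hG12v, hG12s⟩))
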